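/- arXiv:1012.3835 — 5 statements merged into one kernel-verified Lean document; each statement's English description precedes it below -/
import Mathlib

section
/- Let A = VΛV⁻¹ be diagonalizable with Λ the diagonal matrix of eigenvalues. Then the generalized two-sided field of values G(A) = { y*Ax : y = (VV*)⁻¹x, y*x = 1 } equals the classical field of values F(Λ) = { z*Λz : z*z = 1 }. -/
open Matrix

/-- The generalized two-sided field of values of `A`, relative to the
eigenvector matrix `V`. -/
def G {n : ℕ} (V A : Matrix (Fin n) (Fin n) ℂ) : Set ℂ :=
  {c | ∃ x y : Fin n → ℂ, y = (V * Vᴴ)⁻¹ *ᵥ x ∧ star y ⬝ᵥ x = 1 ∧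
    c = star y ⬝ᵥ (A *ᵥ x)}

lemma key_dot {n : ℕ} (V : Matrix (Fin n) (Fin n) ℂ) (x w : Fin n → ℂ) :
    star ((V * Vᴴ)⁻¹ *ᵥ x) ⬝ᵥ w = star (V⁻¹ *ᵥ x) ⬝ᵥ (V⁻¹ *ᵥ w) := by
  rw [star_mulVec, star_mulVec, conjTranspose_nonsing_inv, conjTranspose_mul,
    conjTranspose_conjTranspose, Matrix.mul_inv_rev, conjTranspose_nonsing_inv,
    dotProduct_mulVec, vecMul_vecMul]

theorem stmt6 {n : ℕ} (V A : Matrix (Fin n) (Fin n) ℂ) (d : Fin n → ℂ)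
    (hV : IsUnit V.det) (hA : A = V * Matrix.diagonal d * V⁻¹) :
    G V A = {c | ∃ z : Fin n → ℂ, star z ⬝ᵥ z = 1 ∧
      c = star z ⬝ᵥ (Matrix.diagonal d *ᵥ z)} := by
  have hVinvA : V⁻¹ * A = Matrix.diagonal d * V⁻¹ := by
    rw [hA, ← Matrix.mul_assoc, ← Matrix.mul_assoc, Matrix.nonsing_inv_mul V hV,
      Matrix.one_mul]
  ext c
  constructor
  · rintro ⟨x, y, hy, h1, hc⟩
    subst hy
    refine ⟨V⁻¹ *ᵥ x, ?_, ?_⟩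
    · rw [key_dot] at h1; exact h1
    · rw [key_dot] at hc
      rw [hc, mulVec_mulVec, mulVec_mulVec, hVinvA, ← mulVec_mulVec]
  · rintro ⟨z, hz, hc⟩
    refine ⟨V *ᵥ z, (V * Vᴴ)⁻¹ *ᵥ (V *ᵥ z), rfl, ?_, ?_⟩
    · rw [key_dot, mulVec_mulVec, Matrix.nonsing_inv_mul V hV, one_mulVec]
      exact hz
    · rw [key_dot, mulVec_mulVec, Matrix.nonsing_inv_mul V hV, one_mulVec,
        mulVec_mulVec, hVinvA, mulVec_mulVec, Matrix.mul_assoc,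
        Matrix.nonsing_inv_mul V hV, Matrix.mul_one]
      exact hc
end

section
/- The generalized two-sided field of values G(A) of a diagonalizable matrix A is a compact and convex subset of ℂ. -/
open Matrix

/-!
Substituting `x = V u` turns `y = (V Vᴴ)⁻¹ x` into `y = Vᴴ⁻¹ u`, so `y* x = u* u` and
`y* A x = u* Λ u`: the set `G(A)` is the classical numerical range of `Λ = diagonal d`.
For a unit vector `u`, `u* Λ u = ∑ |uᵢ|² dᵢ`, and the weights `|uᵢ|²` range over the whole
standard simplex, so `G(A)` is the convex hull of the eigenvalues.
-/

open Set

section Convex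

variable {R E ι : Type*} [Field R] [LinearOrder R] [IsStrictOrderedRing R]
  [AddCommGroup E] [Module R E] [Fintype ι]

theorem convexHull_range_eq_image_stdSimplex (v : ι → E) :
    convexHull R (range v) = Fintype.linearCombination R v '' stdSimplex R ι := by
  classical
  rw [← convexHull_rangle_single_eq_stdSimplex, LinearMap.image_convexHull, ← range_comp]
  congr 1
  ext i
  simp [Fintype.linearCombination_apply_single]

end Convex

section NumericalRange

variable {ι : Type*} [Fintype ι]

def numericalRange (C : Matrix ι ι ℂ) : Set ℂ :=
  {c | ∃ u : ι → ℂ, star u ⬝ᵥ u = 1 ∧ c = star u ⬝ᵥ (C *ᵥ u)}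

theorem star_dotProduct_diagonal_mulVec [DecidableEq ι] (d u : ι → ℂ) :
    star u ⬝ᵥ (diagonal d *ᵥ u) =
      Fintype.linearCombination ℝ d (fun i => Complex.normSq (u i)) := by
  simp only [dotProduct, mulVec_diagonal, Fintype.linearCombination_apply, Pi.star_apply,
    Complex.star_def, Complex.real_smul, Complex.normSq_eq_conj_mul_self]
  exact Finset.sum_congr rfl fun i _ => by ring

theorem star_dotProduct_self (u : ι → ℂ) :
    star u ⬝ᵥ u = ((∑ i, Complex.normSq (u i) : ℝ) : ℂ) := by
  classical
  simpa [Fintype.linearCombination_apply] using star_dotProduct_diagonal_mulVec 1 u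

theorem numericalRange_diagonal [DecidableEq ι] (d : ι → ℂ) :
    numericalRange (diagonal d) = convexHull ℝ (range d) := by
  rw [convexHull_range_eq_image_stdSimplex]
  ext c
  constructor
  · rintro ⟨u, hu, rfl⟩
    refine ⟨fun i => Complex.normSq (u i), ⟨fun i => Complex.normSq_nonneg _, ?_⟩,
      (star_dotProduct_diagonal_mulVec d u).symm⟩
    exact_mod_cast (star_dotProduct_self u).symm.trans hu
  · rintro ⟨w, ⟨hw₀, hw₁⟩, rfl⟩
    have hnormSq : (fun i => Complex.normSq (Real.sqrt (w i) : ℂ)) = w := by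
      ext i
      rw [Complex.normSq_ofReal, Real.mul_self_sqrt (hw₀ i)]
    refine ⟨fun i => (Real.sqrt (w i) : ℂ), ?_, ?_⟩
    · rw [star_dotProduct_self, hnormSq, hw₁, Complex.ofReal_one]
    · rw [star_dotProduct_diagonal_mulVec, hnormSq]

end NumericalRange

theorem star_mulVec_dotProduct_conj {ι R : Type*} [Fintype ι] [DecidableEq ι] [CommRing R]
    [StarRing R] {V : Matrix ι ι R} (hV : IsUnit V.det) (C : Matrix ι ι R) (x : ι → R) :
    star ((V * Vᴴ)⁻¹ *ᵥ x) ⬝ᵥ ((V * C * V⁻¹) *ᵥ x) =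
      star (V⁻¹ *ᵥ x) ⬝ᵥ (C *ᵥ (V⁻¹ *ᵥ x)) := by
  -- `star ((V Vᴴ)⁻¹ x) = star (V⁻¹ x) ᵥ* V⁻¹`, and this `V⁻¹` cancels the leading `V`.
  rw [Matrix.mul_inv_rev, ← mulVec_mulVec, star_mulVec, conjTranspose_nonsing_inv,
    conjTranspose_conjTranspose, ← dotProduct_mulVec, Matrix.mul_assoc, ← mulVec_mulVec,
    ← mulVec_mulVec, mulVec_mulVec _ V⁻¹ V, nonsing_inv_mul _ hV, one_mulVec]

theorem G_conj_eq_numericalRange {n : ℕ} {V : Matrix (Fin n) (Fin n) ℂ} (hV : IsUnit V.det)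
    (C : Matrix (Fin n) (Fin n) ℂ) : G V (V * C * V⁻¹) = numericalRange C := by
  have hnorm (x : Fin n → ℂ) :
      star ((V * Vᴴ)⁻¹ *ᵥ x) ⬝ᵥ x = star (V⁻¹ *ᵥ x) ⬝ᵥ (V⁻¹ *ᵥ x) := by
    simpa [mul_nonsing_inv _ hV] using star_mulVec_dotProduct_conj hV 1 x
  have hVinv (u : Fin n → ℂ) : V⁻¹ *ᵥ (V *ᵥ u) = u := by
    rw [mulVec_mulVec, nonsing_inv_mul _ hV, one_mulVec]
  ext c
  constructor
  · rintro ⟨x, _, rfl, hyx, rfl⟩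
    exact ⟨V⁻¹ *ᵥ x, (hnorm x).symm.trans hyx, star_mulVec_dotProduct_conj hV C x⟩
  · rintro ⟨u, hu, rfl⟩
    refine ⟨V *ᵥ u, _, rfl, ?_, ?_⟩
    · rw [hnorm, hVinv, hu]
    · rw [star_mulVec_dotProduct_conj hV, hVinv]

theorem stmt10 {n : ℕ} (V A : Matrix (Fin n) (Fin n) ℂ) (d : Fin n → ℂ)
    (hV : IsUnit V.det) (hA : A = V * Matrix.diagonal d * V⁻¹) :
    IsCompact (G V A) ∧ Convex ℝ (G V A) := by
  rw [hA, G_conj_eq_numericalRange hV, numericalRange_diagonal]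
  exact ⟨(finite_range d).isCompact_convexHull ℝ, convex_convexHull ℝ _⟩
end

section
/- Let A be diagonalizable with all eigenvalues real and positive. Then G(A) ⊂ { z ∈ ℂ : Re z > 0 }, i.e., every element of the generalized two-sided field of values has positive real part. -/
/-!
In the coordinates `u = V⁻¹ x` one has `y* x = u* u` and `y* A x = u* Λ u`, so `y* A x` is the
value of the positive definite form `Λ` at the nonzero vector `u`.
-/

open Matrix

open scoped ComplexOrder

section

variable {ι R : Type*} [Fintype ι] [DecidableEq ι] [CommRing R]

theorem star_inv_mul_conjTranspose_mulVec_dotProduct [StarRing R] (V : Matrix ι ι R)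
    (x w : ι → R) :
    star ((V * Vᴴ)⁻¹ *ᵥ x) ⬝ᵥ w = star (V⁻¹ *ᵥ x) ⬝ᵥ (V⁻¹ *ᵥ w) := by
  rw [Matrix.mul_inv_rev, ← conjTranspose_nonsing_inv, star_mulVec, conjTranspose_mul,
    conjTranspose_conjTranspose, ← vecMul_vecMul, ← star_mulVec, dotProduct_mulVec]

theorem inv_mulVec_mul_mul_inv_mulVec {V : Matrix ι ι R} (hV : IsUnit V.det)
    (D : Matrix ι ι R) (x : ι → R) :
    V⁻¹ *ᵥ ((V * D * V⁻¹) *ᵥ x) = D *ᵥ (V⁻¹ *ᵥ x) := by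
  rw [mulVec_mulVec, ← Matrix.mul_assoc, ← Matrix.mul_assoc, nonsing_inv_mul V hV,
    Matrix.one_mul, mulVec_mulVec]

end

theorem stmt11 {n : ℕ} (V A : Matrix (Fin n) (Fin n) ℂ) (d : Fin n → ℝ)
    (hV : IsUnit V.det)
    (hA : A = V * Matrix.diagonal (fun i => (d i : ℂ)) * V⁻¹)
    (hd : ∀ i, 0 < d i) :
    ∀ c ∈ G V A, 0 < c.re := by
  rintro c ⟨x, y, rfl, hnorm, rfl⟩
  rw [star_inv_mul_conjTranspose_mulVec_dotProduct] at hnorm ⊢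
  have hu : V⁻¹ *ᵥ x ≠ 0 := by
    rintro h
    simp [h] at hnorm
  have hΛ : (diagonal fun i => (d i : ℂ)).PosDef :=
    PosDef.diagonal fun i => Complex.zero_lt_real.mpr (hd i)
  rw [hA, inv_mulVec_mul_mul_inv_mulVec hV]
  exact hΛ.re_dotProduct_pos hu
end

section
/- A diagonalizable matrix A = VΛV⁻¹ satisfies y*Ax > 0 for all nonzero x with y = (VV*)⁻¹x if and only if all eigenvalues of A are real and positive. -/
open Matrix

lemma key12 {n : ℕ} (V : Matrix (Fin n) (Fin n) ℂ) (d : Fin n → ℂ)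
    (hV : IsUnit V.det) (x : Fin n → ℂ) :
    star ((V * Vᴴ)⁻¹ *ᵥ x) ⬝ᵥ ((V * Matrix.diagonal d * V⁻¹) *ᵥ x)
      = ∑ i, d i * (Complex.normSq ((V⁻¹ *ᵥ x) i) : ℂ) := by
  have hB : (V * Vᴴ)⁻¹ = Vᴴ⁻¹ * V⁻¹ := Matrix.mul_inv_rev V Vᴴ
  have hBH : ((V * Vᴴ)⁻¹)ᴴ = (V * Vᴴ)⁻¹ := by
    rw [conjTranspose_nonsing_inv, conjTranspose_mul, conjTranspose_conjTranspose]
  have h1 : star ((V * Vᴴ)⁻¹ *ᵥ x) ⬝ᵥ ((V * Matrix.diagonal d * V⁻¹) *ᵥ x)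
      = star x ⬝ᵥ (((V * Vᴴ)⁻¹ * (V * Matrix.diagonal d * V⁻¹)) *ᵥ x) := by
    rw [star_mulVec, hBH, dotProduct_mulVec, vecMul_vecMul, ← dotProduct_mulVec]
  rw [h1]
  have h2 : (V * Vᴴ)⁻¹ * (V * Matrix.diagonal d * V⁻¹)
      = Vᴴ⁻¹ * (Matrix.diagonal d * V⁻¹) := by
    rw [hB]
    calc Vᴴ⁻¹ * V⁻¹ * (V * Matrix.diagonal d * V⁻¹)
        = Vᴴ⁻¹ * ((V⁻¹ * V) * (Matrix.diagonal d * V⁻¹)) := by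
          simp only [Matrix.mul_assoc]
      _ = Vᴴ⁻¹ * (Matrix.diagonal d * V⁻¹) := by
          rw [Matrix.nonsing_inv_mul V hV, Matrix.one_mul]
  rw [h2]
  have h3 : star x ⬝ᵥ ((Vᴴ⁻¹ * (Matrix.diagonal d * V⁻¹)) *ᵥ x)
      = star (V⁻¹ *ᵥ x) ⬝ᵥ (Matrix.diagonal d *ᵥ (V⁻¹ *ᵥ x)) := by
    rw [← Matrix.mulVec_mulVec, star_mulVec, conjTranspose_nonsing_inv,
      dotProduct_mulVec, Matrix.mulVec_mulVec, ← dotProduct_mulVec,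
      Matrix.mulVec_mulVec]
  rw [h3]
  set z := V⁻¹ *ᵥ x with hz
  rw [dotProduct]
  refine Finset.sum_congr rfl fun i _ => ?_
  simp [Matrix.mulVec_diagonal, Complex.normSq_eq_conj_mul_self]
  ring

theorem stmt12 {n : ℕ} (V A : Matrix (Fin n) (Fin n) ℂ) (d : Fin n → ℂ)
    (hV : IsUnit V.det) (hA : A = V * Matrix.diagonal d * V⁻¹) :
    (∀ x : Fin n → ℂ, x ≠ 0 →
      ∃ r : ℝ, 0 < r ∧ star ((V * Vᴴ)⁻¹ *ᵥ x) ⬝ᵥ (A *ᵥ x) = (r : ℂ)) ↔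
    (∀ i, ∃ r : ℝ, 0 < r ∧ d i = (r : ℂ)) := by
  subst hA
  constructor
  · intro h i
    set x : Fin n → ℂ := V *ᵥ Pi.single i 1 with hx
    have hzx : V⁻¹ *ᵥ x = Pi.single i 1 := by
      rw [hx, Matrix.mulVec_mulVec, Matrix.nonsing_inv_mul V hV, Matrix.one_mulVec]
    have hxne : x ≠ 0 := by
      intro h0
      have : (Pi.single i 1 : Fin n → ℂ) = 0 := by
        rw [← hzx, h0, Matrix.mulVec_zero]
      have := congrFun this i
      simp at this
    obtain ⟨r, hr, hval⟩ := h x hxne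
    refine ⟨r, hr, ?_⟩
    rw [key12 V d hV x, hzx] at hval
    rw [← hval]
    rw [Finset.sum_eq_single i]
    · simp
    · intro j _ hj
      simp [Pi.single_apply, hj]
    · simp
  · intro h x hxne
    choose r hr hd using h
    set z := V⁻¹ *ᵥ x with hz
    have hzne : z ≠ 0 := by
      intro h0
      apply hxne
      have : V *ᵥ z = x := by
        rw [hz, Matrix.mulVec_mulVec, Matrix.mul_nonsing_inv V hV, Matrix.one_mulVec]
      rw [← this, h0, Matrix.mulVec_zero]
    refine ⟨∑ i, r i * Complex.normSq (z i), ?_, ?_⟩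
    · obtain ⟨j, hj⟩ := Function.ne_iff.mp hzne
      refine Finset.sum_pos' (fun i _ => ?_) ⟨j, Finset.mem_univ j, ?_⟩
      · exact mul_nonneg (hr i).le (Complex.normSq_nonneg _)
      · exact mul_pos (hr j) (Complex.normSq_pos.mpr hj)
    · rw [key12 V d hV x, ← hz]
      push_cast
      exact Finset.sum_congr rfl fun i _ => by rw [hd i]
end

section
/- Courant–Fischer for non-Hermitian matrices with real spectrum: let A = VΛV⁻¹ with real eigenvalues λ_1 ≤ … ≤ λ_n. For each 1 ≤ j ≤ n, λ_j = min over j-dimensional subspaces S of ℂⁿ of the max over nonzero x ∈ S with y = (VV*)⁻¹x and y*x ≠ 0 of (y*Ax)/(y*x), and also λ_j = max over (n−j+1)-dimensional subspaces S' of the min over nonzero q ∈ S' with p = (VV*)⁻¹q and p*q ≠ 0 of (p*Aq)/(p*q). -/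
open Matrix

/-- The set of values of the constrained two-sided Rayleigh quotient of `A`
(relative to eigenvector matrix `V`) over a subspace `S`. -/
def rqSet {n : ℕ} (V A : Matrix (Fin n) (Fin n) ℂ)
    (S : Submodule ℂ (Fin n → ℂ)) : Set ℝ :=
  {t | ∃ x ∈ S, star ((V * Vᴴ)⁻¹ *ᵥ x) ⬝ᵥ x ≠ 0 ∧
    (star ((V * Vᴴ)⁻¹ *ᵥ x) ⬝ᵥ (A *ᵥ x)) / (star ((V * Vᴴ)⁻¹ *ᵥ x) ⬝ᵥ x) = (t : ℂ)}

namespace Stmt19Aux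

open Finset

variable {n : ℕ}

noncomputable def Nf (z : Fin n → ℂ) : ℝ := ∑ i, ‖z i‖ ^ 2
noncomputable def Qf (d : Fin n → ℝ) (z : Fin n → ℂ) : ℝ := ∑ i, d i * ‖z i‖ ^ 2

lemma Nf_pos {z : Fin n → ℂ} (hz : z ≠ 0) : 0 < Nf z := by
  rcases Function.ne_iff.mp hz with ⟨i, hi⟩
  refine Finset.sum_pos' (fun k _ => by positivity) ⟨i, Finset.mem_univ i, ?_⟩
  have : (0:ℝ) < ‖z i‖ := norm_pos_iff.mpr hi
  positivity

lemma star_mul_self' (a : ℂ) : star a * a = ((‖a‖ ^ 2 : ℝ) : ℂ) := by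
  rw [Complex.star_def, Complex.conj_mul']
  push_cast
  ring

lemma starDot (z : Fin n → ℂ) : star z ⬝ᵥ z = (Nf z : ℂ) := by
  simp only [dotProduct, Pi.star_apply, star_mul_self', Nf]
  push_cast
  rfl

lemma starDotD (d : Fin n → ℝ) (z : Fin n → ℂ) :
    star z ⬝ᵥ (diagonal (fun i => (d i : ℂ)) *ᵥ z) = (Qf d z : ℂ) := by
  simp only [dotProduct, Qf, Pi.star_apply, mulVec_diagonal]
  push_cast
  refine Finset.sum_congr rfl fun i _ => ?_
  rw [show star (z i) * ((d i : ℂ) * z i) = (d i : ℂ) * (star (z i) * z i) by ring,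
    star_mul_self']
  push_cast
  ring

lemma dot_key (V : Matrix (Fin n) (Fin n) ℂ) (x w : Fin n → ℂ) :
    star ((V * Vᴴ)⁻¹ *ᵥ x) ⬝ᵥ w = star (V⁻¹ *ᵥ x) ⬝ᵥ (V⁻¹ *ᵥ w) := by
  rw [Matrix.mul_inv_rev, ← Matrix.mulVec_mulVec, Matrix.star_mulVec,
    ← Matrix.dotProduct_mulVec, Matrix.conjTranspose_nonsing_inv,
    Matrix.conjTranspose_conjTranspose, Matrix.star_mulVec, ← Matrix.dotProduct_mulVec,
    Matrix.conjTranspose_nonsing_inv, Matrix.mulVec_mulVec]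

lemma mem_rqSet_iff {V A : Matrix (Fin n) (Fin n) ℂ} {d : Fin n → ℝ} (hV : IsUnit V.det)
    (hA : A = V * Matrix.diagonal (fun i => (d i : ℂ)) * V⁻¹)
    (S : Submodule ℂ (Fin n → ℂ)) (t : ℝ) :
    t ∈ rqSet V A S ↔ ∃ z : Fin n → ℂ, V *ᵥ z ∈ S ∧ z ≠ 0 ∧ Qf d z / Nf z = t := by
  have hVA : V⁻¹ * A = Matrix.diagonal (fun i => (d i : ℂ)) * V⁻¹ := by
    rw [hA, ← Matrix.mul_assoc, ← Matrix.mul_assoc, Matrix.nonsing_inv_mul V hV, Matrix.one_mul]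
  constructor
  · rintro ⟨x, hxS, hne, heq⟩
    set z := V⁻¹ *ᵥ x with hz
    have hxz : V *ᵥ z = x := by
      rw [hz, Matrix.mulVec_mulVec, Matrix.mul_nonsing_inv V hV, Matrix.one_mulVec]
    have hdot : star ((V * Vᴴ)⁻¹ *ᵥ x) ⬝ᵥ x = (Nf z : ℂ) := by
      rw [dot_key, ← hz, starDot]
    have hdotA : star ((V * Vᴴ)⁻¹ *ᵥ x) ⬝ᵥ (A *ᵥ x) = (Qf d z : ℂ) := by
      rw [dot_key, Matrix.mulVec_mulVec, hVA, ← Matrix.mulVec_mulVec, ← hz, starDotD]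
    have hzne : z ≠ 0 := by
      intro h
      rw [hdot, h] at hne
      simp [Nf] at hne
    refine ⟨z, hxz ▸ hxS, hzne, ?_⟩
    have hN : (Nf z : ℂ) ≠ 0 := by
      exact_mod_cast (Nf_pos hzne).ne'
    rw [hdot, hdotA, div_eq_iff hN] at heq
    rw [div_eq_iff (Nf_pos hzne).ne']
    exact_mod_cast heq
  · rintro ⟨z, hzS, hzne, heq⟩
    obtain ⟨x, hx⟩ : ∃ x, x = V *ᵥ z := ⟨_, rfl⟩
    have hzx : V⁻¹ *ᵥ x = z := by
      rw [hx, Matrix.mulVec_mulVec, Matrix.nonsing_inv_mul V hV, Matrix.one_mulVec]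
    have hdot : star ((V * Vᴴ)⁻¹ *ᵥ x) ⬝ᵥ x = (Nf z : ℂ) := by
      rw [dot_key, hzx, starDot]
    have hdotA : star ((V * Vᴴ)⁻¹ *ᵥ x) ⬝ᵥ (A *ᵥ x) = (Qf d z : ℂ) := by
      rw [dot_key, hzx, Matrix.mulVec_mulVec, hVA, ← Matrix.mulVec_mulVec, hzx, starDotD]
    have hN : (Nf z : ℂ) ≠ 0 := by exact_mod_cast (Nf_pos hzne).ne'
    refine ⟨x, hx ▸ hzS, by rw [hdot]; exact hN, ?_⟩
    rw [hdot, hdotA, ← heq]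
    push_cast
    ring

noncomputable def coordSub (s : Finset (Fin n)) : Submodule ℂ (Fin n → ℂ) where
  carrier := {z | ∀ i ∉ s, z i = 0}
  add_mem' := fun ha hb i hi => by simp [ha i hi, hb i hi]
  zero_mem' := fun i _ => rfl
  smul_mem' := fun c z hz i hi => by simp [hz i hi]

lemma mem_coordSub {s : Finset (Fin n)} {z : Fin n → ℂ} :
    z ∈ coordSub s ↔ ∀ i ∉ s, z i = 0 := Iff.rfl

lemma single_mem_coordSub {s : Finset (Fin n)} {i : Fin n} (hi : i ∈ s) :
    Pi.single i (1:ℂ) ∈ coordSub s := by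
  intro k hk
  exact Pi.single_eq_of_ne (fun h => hk (by rw [h]; exact hi)) 1

lemma coordSub_eq_span (s : Finset (Fin n)) :
    coordSub s = Submodule.span ℂ (Set.range fun i : s => (Pi.single (i : Fin n) (1:ℂ) : Fin n → ℂ)) := by
  apply le_antisymm
  · intro z hz
    have : z = ∑ i ∈ s, z i • (Pi.single i (1:ℂ) : Fin n → ℂ) := by
      funext k
      rw [Finset.sum_apply]
      by_cases hk : k ∈ s
      · rw [Finset.sum_eq_single k]
        · simp
        · intro b _ hb
          simp [Pi.single_eq_of_ne hb.symm]
        · exact fun h => absurd hk h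
      · rw [hz k hk]
        symm
        apply Finset.sum_eq_zero
        intro b hb
        have hbk : b ≠ k := fun h => hk (h ▸ hb)
        simp [Pi.single_eq_of_ne (Ne.symm hbk)]
    rw [this]
    apply Submodule.sum_mem
    intro i hi
    exact Submodule.smul_mem _ _ (Submodule.subset_span ⟨⟨i, hi⟩, rfl⟩)
  · rw [Submodule.span_le]
    rintro _ ⟨⟨i, hi⟩, rfl⟩
    exact single_mem_coordSub hi

lemma finrank_coordSub (s : Finset (Fin n)) :
    Module.finrank ℂ (coordSub s) = s.card := by
  rw [coordSub_eq_span]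
  have hli : LinearIndependent ℂ (fun i : s => (Pi.single (i : Fin n) (1:ℂ) : Fin n → ℂ)) := by
    have hb := (Pi.basisFun ℂ (Fin n)).linearIndependent
    have : (fun i : s => (Pi.single (i : Fin n) (1:ℂ) : Fin n → ℂ))
        = (Pi.basisFun ℂ (Fin n)) ∘ (fun i : s => (i : Fin n)) := by
      funext i
      simp [Pi.basisFun_apply]
    rw [this]
    exact hb.comp _ Subtype.val_injective
  rw [finrank_span_eq_card hli, Fintype.card_coe]

lemma exists_ne_zero_inter (T U : Submodule ℂ (Fin n → ℂ))
    (h : n < Module.finrank ℂ T + Module.finrank ℂ U) :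
    ∃ z, z ∈ T ∧ z ∈ U ∧ z ≠ 0 := by
  have hsum := Submodule.finrank_sup_add_finrank_inf_eq T U
  have hle : Module.finrank ℂ ↥(T ⊔ U) ≤ n := by
    simpa using Submodule.finrank_le (T ⊔ U)
  have hpos : 0 < Module.finrank ℂ ↥(T ⊓ U) := by omega
  have hne : T ⊓ U ≠ ⊥ := by
    intro hbot
    rw [hbot, finrank_bot] at hpos
    exact lt_irrefl 0 hpos
  obtain ⟨z, hz, hzne⟩ := Submodule.exists_mem_ne_zero_of_ne_bot hne
  exact ⟨z, hz.1, hz.2, hzne⟩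

lemma Qf_le_of_le {d : Fin n → ℝ} (hmono : Monotone d) (j : Fin n) {z : Fin n → ℂ}
    (hz : ∀ i, ¬ i ≤ j → z i = 0) : Qf d z ≤ d j * Nf z := by
  rw [Nf, Finset.mul_sum]
  refine Finset.sum_le_sum fun i _ => ?_
  by_cases hi : i ≤ j
  · exact mul_le_mul_of_nonneg_right (hmono hi) (by positivity)
  · rw [hz i hi]; simp

lemma le_Qf_of_le {d : Fin n → ℝ} (hmono : Monotone d) (j : Fin n) {z : Fin n → ℂ}
    (hz : ∀ i, ¬ j ≤ i → z i = 0) : d j * Nf z ≤ Qf d z := by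
  rw [Nf, Finset.mul_sum]
  refine Finset.sum_le_sum fun i _ => ?_
  by_cases hi : j ≤ i
  · exact mul_le_mul_of_nonneg_right (hmono hi) (by positivity)
  · rw [hz i hi]; simp

lemma Nf_single (j : Fin n) : Nf (Pi.single j (1:ℂ)) = 1 := by
  rw [Nf, Finset.sum_eq_single j]
  · simp
  · intro b _ hb
    simp [Pi.single_eq_of_ne hb]
  · simp

lemma Qf_single (d : Fin n → ℝ) (j : Fin n) : Qf d (Pi.single j (1:ℂ)) = d j := by
  rw [Qf, Finset.sum_eq_single j]
  · simp
  · intro b _ hb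
    simp [Pi.single_eq_of_ne hb]
  · simp

lemma single_ne_zero' (j : Fin n) : (Pi.single j (1:ℂ) : Fin n → ℂ) ≠ 0 := by
  intro h
  have := congrFun h j
  simp at this

end Stmt19Aux

open Stmt19Aux Finset

theorem stmt19 {n : ℕ} (V A : Matrix (Fin n) (Fin n) ℂ) (d : Fin n → ℝ)
    (hmono : Monotone d) (hV : IsUnit V.det)
    (hA : A = V * Matrix.diagonal (fun i => (d i : ℂ)) * V⁻¹) (j : Fin n) :
    IsLeast {r : ℝ | ∃ S : Submodule ℂ (Fin n → ℂ),
        Module.finrank ℂ S = (j : ℕ) + 1 ∧ IsGreatest (rqSet V A S) r} (d j) ∧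
    IsGreatest {r : ℝ | ∃ S : Submodule ℂ (Fin n → ℂ),
        Module.finrank ℂ S = n - (j : ℕ) ∧ IsLeast (rqSet V A S) r} (d j) := by
  haveI := V.invertibleOfIsUnitDet hV
  let e : (Fin n → ℂ) ≃ₗ[ℂ] (Fin n → ℂ) := V.toLinearEquiv' ‹Invertible V›
  have he : ∀ z, e z = V *ᵥ z := fun z => by
    simp [e, Matrix.toLinearEquiv', Matrix.toLin'_apply]
  have hmap : ∀ (C : Submodule ℂ (Fin n → ℂ)) (z : Fin n → ℂ),
      V *ᵥ z ∈ Submodule.map e.toLinearMap C ↔ z ∈ C := by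
    intro C z
    rw [← he, Submodule.mem_map_equiv, e.symm_apply_apply]
  have hmapS : ∀ (S : Submodule ℂ (Fin n → ℂ)) (z : Fin n → ℂ),
      z ∈ Submodule.map e.symm.toLinearMap S ↔ V *ᵥ z ∈ S := by
    intro S z
    rw [Submodule.mem_map_equiv, e.symm_symm, he]
  have hjn : (j : ℕ) < n := j.isLt
  constructor
  · constructor
    · -- membership: the subspace V·span(e_0..e_j) achieves max d j
      refine ⟨Submodule.map e.toLinearMap (coordSub (Finset.Iic j)), ?_, ?_, ?_⟩
      · rw [LinearEquiv.finrank_map_eq, finrank_coordSub, Fin.card_Iic]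
      · rw [mem_rqSet_iff hV hA]
        refine ⟨Pi.single j 1, (hmap _ _).mpr (single_mem_coordSub (Finset.mem_Iic.mpr le_rfl)),
          single_ne_zero' j, ?_⟩
        rw [Nf_single, Qf_single, div_one]
      · intro t ht
        rw [mem_rqSet_iff hV hA] at ht
        obtain ⟨z, hzS, hzne, heq⟩ := ht
        have hz : ∀ i, ¬ i ≤ j → z i = 0 := by
          intro i hi
          exact (hmap _ _).mp hzS i (by simpa using hi)
        have hQ := Qf_le_of_le hmono j hz
        rw [← heq, div_le_iff₀ (Nf_pos hzne)]
        linarith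
    · -- lower bound
      rintro r ⟨S, hdim, hgr⟩
      have hT : Module.finrank ℂ (Submodule.map e.symm.toLinearMap S) = (j : ℕ) + 1 := by
        rw [LinearEquiv.finrank_map_eq, hdim]
      obtain ⟨z, hzT, hzC, hzne⟩ := exists_ne_zero_inter (Submodule.map e.symm.toLinearMap S)
        (coordSub (Finset.Ici j)) (by rw [hT, finrank_coordSub, Fin.card_Ici]; omega)
      have hmem : Qf d z / Nf z ∈ rqSet V A S := by
        rw [mem_rqSet_iff hV hA]
        exact ⟨z, (hmapS _ _).mp hzT, hzne, rfl⟩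
      have hz : ∀ i, ¬ j ≤ i → z i = 0 := fun i hi => hzC i (by simpa using hi)
      have hQ := le_Qf_of_le hmono j hz
      have : d j ≤ Qf d z / Nf z := by
        rw [le_div_iff₀ (Nf_pos hzne)]
        linarith
      exact le_trans this (hgr.2 hmem)
  · constructor
    · -- membership: the subspace V·span(e_j..e_{n-1}) achieves min d j
      refine ⟨Submodule.map e.toLinearMap (coordSub (Finset.Ici j)), ?_, ?_, ?_⟩
      · rw [LinearEquiv.finrank_map_eq, finrank_coordSub, Fin.card_Ici]
      · rw [mem_rqSet_iff hV hA]
        refine ⟨Pi.single j 1, (hmap _ _).mpr (single_mem_coordSub (Finset.mem_Ici.mpr le_rfl)),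
          single_ne_zero' j, ?_⟩
        rw [Nf_single, Qf_single, div_one]
      · intro t ht
        rw [mem_rqSet_iff hV hA] at ht
        obtain ⟨z, hzS, hzne, heq⟩ := ht
        have hz : ∀ i, ¬ j ≤ i → z i = 0 := by
          intro i hi
          exact (hmap _ _).mp hzS i (by simpa using hi)
        have hQ := le_Qf_of_le hmono j hz
        rw [← heq, le_div_iff₀ (Nf_pos hzne)]
        linarith
    · -- upper bound
      rintro r ⟨S, hdim, hls⟩
      have hT : Module.finrank ℂ (Submodule.map e.symm.toLinearMap S) = n - (j : ℕ) := by
        rw [LinearEquiv.finrank_map_eq, hdim]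
      obtain ⟨z, hzT, hzC, hzne⟩ := exists_ne_zero_inter (Submodule.map e.symm.toLinearMap S)
        (coordSub (Finset.Iic j)) (by rw [hT, finrank_coordSub, Fin.card_Iic]; omega)
      have hmem : Qf d z / Nf z ∈ rqSet V A S := by
        rw [mem_rqSet_iff hV hA]
        exact ⟨z, (hmapS _ _).mp hzT, hzne, rfl⟩
      have hz : ∀ i, ¬ i ≤ j → z i = 0 := fun i hi => hzC i (by simpa using hi)
      have hQ := Qf_le_of_le hmono j hz
      have : Qf d z / Nf z ≤ d j := by
        rw [div_le_iff₀ (Nf_pos hzne)]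
        linarith
      exact le_trans (hls.2 hmem) this
end
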